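/- Let (X, 𝔄, d) be a C*-algebra valued metric space over a unital C*-algebra 𝔄, and let T, S : X → X be two mappings for which there exist maps q : X × X → 𝔄 with ‖q(x,y)‖ < 1 for all x,y, and δ : X × X → 𝔄₊, such that d(Tⁿx, Sⁿy) ⪯ (q(x,y)*)ⁿ · δ(x,y) · q(x,y)ⁿ for all x,y ∈ X and all n ≥ 1. Then any fixed point of T coincides with any fixed point of S: if Tw = w and Sz = z, then w = z. In particular T and S have at most one common fixed point. -/
import Mathlib


open Filter Topology Function

/-- A C*-algebra valued metric space: `d : X × X → A` into a unital C*-algebra `A`. -/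
structure CStarMetric (X : Type*) (A : Type*) [NormedRing A] [StarRing A] [PartialOrder A] where
  d : X → X → A
  nonneg : ∀ x y, 0 ≤ d x y
  eq_zero_iff : ∀ x y, d x y = 0 ↔ x = y
  symm : ∀ x y, d x y = d y x
  triangle : ∀ x y z, d x y ≤ d x z + d z y

variable {X A : Type*} [NormedRing A] [StarRing A] [CStarRing A] [PartialOrder A]
  [StarOrderedRing A] [CompleteSpace A] [NormedAlgebra ℂ A]

/-- A sequence converges to `x` when `‖d (s n) x‖ → 0`. -/
def CStarConverges (M : CStarMetric X A) (s : ℕ → X) (x : X) : Prop :=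
  Tendsto (fun n => ‖M.d (s n) x‖) atTop (𝓝 (0 : ℝ))

/-- Cauchy sequence: `‖d (s n) (s m)‖ → 0` as `n, m → ∞`. -/
def CStarCauchy (M : CStarMetric X A) (s : ℕ → X) : Prop :=
  ∀ ε : ℝ, 0 < ε → ∃ N : ℕ, ∀ n m : ℕ, N ≤ n → N ≤ m → ‖M.d (s n) (s m)‖ < ε

/-- Completeness: every Cauchy sequence converges. -/
def CStarComplete (M : CStarMetric X A) : Prop :=
  ∀ s : ℕ → X, CStarCauchy M s → ∃ x, CStarConverges M s x

/-- Orbital continuity of `T` at `u`. -/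
def OrbContAt (M : CStarMetric X A) (T : X → X) (u : X) : Prop :=
  ∀ (x : X) (k : ℕ → ℕ), StrictMono k →
    Tendsto (fun i => ‖M.d (T^[k i] x) u‖) atTop (𝓝 (0 : ℝ)) →
    Tendsto (fun i => ‖M.d (T^[k i + 1] x) (T u)‖) atTop (𝓝 (0 : ℝ))

/-- Orbital continuity of `T` on `X`. -/
def OrbCont (M : CStarMetric X A) (T : X → X) : Prop :=
  ∀ u, OrbContAt M T u

/-- Ćirić-type1 contractive mapping. -/
def CiricType1 (M : CStarMetric X A) (T : X → X) : Prop :=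
  ∃ q δ : X → X → A, (∀ x y, ‖q x y‖ < 1) ∧ (∀ x y, 0 ≤ δ x y) ∧
    ∀ x y : X, ∀ n : ℕ, 1 ≤ n →
      M.d (T^[n] x) (T^[n] y) ≤ star (q x y) ^ n * δ x y * q x y ^ n

/-- Ćirić-type2 contractive mapping: `q` takes values in the central positive elements. -/
def CiricType2 (M : CStarMetric X A) (T : X → X) : Prop :=
  ∃ q δ : X → X → A,
    (∀ x y, 0 ≤ q x y ∧ (∀ b : A, q x y * b = b * q x y) ∧ ‖q x y‖ < 1) ∧
    (∀ x y, 0 ≤ δ x y) ∧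
    ∀ x y : X, ∀ n : ℕ, 1 ≤ n → M.d (T^[n] x) (T^[n] y) ≤ q x y ^ n * δ x y


section Aux

open Complex

variable {A : Type*} [NormedRing A] [StarRing A] [CStarRing A] [PartialOrder A]
  [StarOrderedRing A] [CompleteSpace A] [NormedAlgebra ℂ A]

lemma my_uv_eq_one {A : Type*} [NormedRing A] [StarRing A] [CStarRing A] [PartialOrder A]
    [StarOrderedRing A] (u v : A) (hv : v = star u)
    (hcv : ∀ b : A, v * b = b * v) (hu2 : u * u = -1) (hv2 : v * v = -1) :
    u * v = 1 := by
  have hpnonneg : (0 : A) ≤ u * v := by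
    have h := star_mul_self_nonneg (star u)
    rw [star_star] at h
    rw [hv]; exact h
  have hp2 : (u * v) * (u * v) = 1 := by
    calc (u * v) * (u * v) = u * (v * u) * v := by noncomm_ring
    _ = u * (u * v) * v := by rw [hcv]
    _ = (u * u) * (v * v) := by noncomm_ring
    _ = 1 := by rw [hu2, hv2]; noncomm_ring
  have hpstar : star (u * v) = u * v := by
    rw [star_mul, hv, star_star]
  have hcstar : star (1 - u * v) = 1 - u * v := by
    rw [star_sub, star_one, hpstar]
  have hcc : (1 - u * v) * (1 - u * v) = (1 - u * v) + (1 - u * v) := by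
    have h : (1 - u * v) * (1 - u * v) = 1 - (u * v) - (u * v) + (u * v) * (u * v) := by
      noncomm_ring
    rw [h, hp2]; noncomm_ring
  have h1 : (0 : A) ≤ star (1 - u * v) * (u * v) * (1 - u * v) :=
    star_left_conjugate_nonneg hpnonneg _
  have hcpc : star (1 - u * v) * (u * v) * (1 - u * v) = -((1 - u * v) + (1 - u * v)) := by
    rw [hcstar]
    have h3 : ((1 : A) - u * v) * (u * v) = u * v - 1 := by
      have h : ((1 : A) - u * v) * (u * v) = u * v - (u * v) * (u * v) := by noncomm_ring
      rw [h, hp2]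
    rw [h3]
    have h4 : (u * v - 1) * (1 - u * v) = -(((1 : A) - u * v) * ((1 : A) - u * v)) := by
      noncomm_ring
    rw [h4, hcc]
  have h2 : (0 : A) ≤ (1 - u * v) + (1 - u * v) := by
    have h := star_mul_self_nonneg (1 - u * v)
    rwa [hcstar, hcc] at h
  rw [hcpc] at h1
  have hsum : (1 - u * v) + (1 - u * v) = 0 :=
    le_antisymm (by simpa using neg_nonneg.mp (by simpa using h1)) h2
  have hcc0 : (1 - u * v) * (1 - u * v) = 0 := by rw [hcc, hsum]
  have hnorm : ‖(1 : A) - u * v‖ * ‖(1 : A) - u * v‖ = 0 := by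
    rw [← CStarRing.norm_star_mul_self, hcstar, hcc0, norm_zero]
  have : (1 : A) - u * v = 0 := norm_eq_zero.mp (mul_self_eq_zero.mp hnorm)
  rw [sub_eq_zero] at this
  exact this.symm

section Aux2

variable {A : Type*} [NormedRing A] [StarRing A] [CStarRing A] [PartialOrder A]
  [StarOrderedRing A] [CompleteSpace A] [NormedAlgebra ℂ A]

lemma my_star_I_smul_one : star (Complex.I • (1 : A)) = -(Complex.I • (1 : A)) := by
  have hcentral : ∀ b : A, (Complex.I • (1 : A)) * b = b * (Complex.I • (1 : A)) := by
    intro b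
    rw [smul_mul_assoc, one_mul, mul_smul_comm, mul_one]
  have hu2 : (Complex.I • (1 : A)) * (Complex.I • (1 : A)) = -1 := by
    rw [smul_mul_smul_comm, one_mul, Complex.I_mul_I, neg_smul, one_smul]
  have hvcentral : ∀ b : A, star (Complex.I • (1 : A)) * b = b * star (Complex.I • (1 : A)) := by
    intro b
    have e1 : star (Complex.I • (1 : A)) * b = star (star b * (Complex.I • (1 : A))) := by
      rw [star_mul, star_star]
    have e2 : star ((Complex.I • (1 : A)) * star b) = b * star (Complex.I • (1 : A)) := by
      rw [star_mul, star_star]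
    rw [e1, ← hcentral (star b), e2]
  have hv2 : star (Complex.I • (1 : A)) * star (Complex.I • (1 : A)) = -1 := by
    have h := congrArg star hu2
    rwa [star_mul, star_neg, star_one] at h
  have huv : (Complex.I • (1 : A)) * star (Complex.I • (1 : A)) = 1 :=
    my_uv_eq_one _ _ rfl hvcentral hu2 hv2
  have hvu : star (Complex.I • (1 : A)) * (Complex.I • (1 : A)) = 1 := by
    rw [hvcentral]; exact huv
  have h6 : (Complex.I • (1 : A)) * (star (Complex.I • (1 : A)) + Complex.I • (1 : A)) = 0 := by
    rw [mul_add, huv, hu2, add_neg_cancel]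
  have h7 := congrArg (fun x => star (Complex.I • (1 : A)) * x) h6
  simp only [mul_zero] at h7
  rw [← mul_assoc, hvu, one_mul] at h7
  exact eq_neg_of_add_eq_zero_left h7

lemma my_star_real_smul (r : ℝ) (a : A) : star ((r : ℂ) • a) = (r : ℂ) • star a := by
  have hq : ∀ q : ℚ, star ((q : ℂ) • a) = (q : ℂ) • star a := fun q =>
    map_ratCast_smul (starAddEquiv : A ≃+ A) ℂ ℂ q a
  have hcont1 : Continuous fun r : ℝ => star ((r : ℂ) • a) :=
    continuous_star.comp ((Complex.continuous_ofReal.smul continuous_const))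
  have hcont2 : Continuous fun r : ℝ => (r : ℂ) • star a :=
    Complex.continuous_ofReal.smul continuous_const
  have := DenseRange.equalizer Rat.denseRange_cast hcont1 hcont2 (funext fun q => by
    simpa using hq q)
  exact congrFun this r

lemma my_starModule : StarModule ℂ A := by
  constructor
  intro z a
  have hIa : Complex.I • a = (Complex.I • (1 : A)) * a := by
    rw [smul_mul_assoc, one_mul]
  have hstarI : star (Complex.I • a) = -(Complex.I • star a) := by
    rw [hIa, star_mul, my_star_I_smul_one, mul_neg, mul_smul_comm, mul_one]
  have hz : z = (z.re : ℂ) + (z.im : ℂ) * Complex.I := (Complex.re_add_im z).symm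
  calc star (z • a) = star ((z.re : ℂ) • a + (z.im : ℂ) • (Complex.I • a)) := by
        rw [smul_smul, ← add_smul, ← hz]
  _ = (z.re : ℂ) • star a + (z.im : ℂ) • star (Complex.I • a) := by
        rw [star_add, my_star_real_smul, my_star_real_smul]
  _ = (z.re : ℂ) • star a - (z.im : ℂ) • (Complex.I • star a) := by
        rw [hstarI, smul_neg, sub_eq_add_neg]
  _ = ((starRingEnd ℂ) z) • star a := by
        rw [smul_smul, ← sub_smul]
        congr 1
        rw [Complex.ext_iff]
        simp [Complex.conj_re, Complex.conj_im]

end Aux2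

end Aux

/-- Under the joint Ciric-type1 condition, any fixed point of T coincides with any
fixed point of S. -/
theorem joint_ciric1_fixedPoints_coincide
    (M : CStarMetric X A) (T S : X → X)
    (q δ : X → X → A) (hq : ∀ x y, ‖q x y‖ < 1) (hδ : ∀ x y, 0 ≤ δ x y)
    (hTS : ∀ x y : X, ∀ n : ℕ, 1 ≤ n →
      M.d (T^[n] x) (S^[n] y) ≤ star (q x y) ^ n * δ x y * q x y ^ n)
    (w z : X) (hw : T w = w) (hz : S z = z) : w = z := by
  letI : StarModule ℂ A := my_starModule
  letI : CStarAlgebra A := { }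
  by_contra hne
  have key : ∀ n : ℕ, 1 ≤ n → M.d w z ≤ star (q w z) ^ n * δ w z * q w z ^ n := by
    intro n hn
    have h := hTS w z n hn
    rwa [Function.iterate_fixed hw n, Function.iterate_fixed hz n] at h
  set r : ℝ := ‖q w z‖ with hr
  have hr0 : 0 ≤ r := norm_nonneg _
  have hr1 : r < 1 := hq w z
  have hbound : ∀ n : ℕ, 1 ≤ n → ‖M.d w z‖ ≤ r ^ n * ‖δ w z‖ * r ^ n := by
    intro n hn
    have h1 : ‖M.d w z‖ ≤ ‖star (q w z) ^ n * δ w z * q w z ^ n‖ :=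
      CStarAlgebra.norm_le_norm_of_nonneg_of_le (M.nonneg w z) (key n hn)
    refine h1.trans ?_
    calc ‖star (q w z) ^ n * δ w z * q w z ^ n‖
        ≤ ‖star (q w z) ^ n * δ w z‖ * ‖q w z ^ n‖ := norm_mul_le _ _
    _ ≤ ‖star (q w z) ^ n‖ * ‖δ w z‖ * ‖q w z ^ n‖ := by
        gcongr; exact norm_mul_le _ _
    _ ≤ ‖star (q w z)‖ ^ n * ‖δ w z‖ * ‖q w z‖ ^ n := by
        gcongr <;> exact norm_pow_le' _ (by omega)
    _ = r ^ n * ‖δ w z‖ * r ^ n := by rw [norm_star]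
  have htend : Filter.Tendsto (fun n : ℕ => r ^ n * ‖δ w z‖ * r ^ n) Filter.atTop (nhds 0) := by
    have h1 : Filter.Tendsto (fun n : ℕ => r ^ n) Filter.atTop (nhds 0) :=
      tendsto_pow_atTop_nhds_zero_of_lt_one hr0 hr1
    have := (h1.mul_const ‖δ w z‖).mul h1
    simpa using this
  have hle : ‖M.d w z‖ ≤ 0 := by
    refine ge_of_tendsto htend ?_
    filter_upwards [Filter.eventually_ge_atTop 1] with n hn
    exact hbound n hn
  have : M.d w z = 0 := norm_eq_zero.mp (le_antisymm hle (norm_nonneg _))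
  exact hne ((M.eq_zero_iff w z).mp this)
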